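/- If u and v are distinct nodes of a finite rooted tree such that the edge into u and the edge into v are both '0-annotated', and from each node there is a path of strictly decreasing ('non-0-annotated') edges to some leaf, then the strictly-decreasing paths chosen from u and from v to leaves are vertex-disjoint whenever neither of u, v is an ancestor of the other along those paths; consequently, the number of 0-annotated edges in such a tree is at most the number of leaves. -/

import Mathlib

/-!
Send each node `v` whose incoming edge is 0-annotated to the leaf reached from `v` along
non-0 edges. This map is injective: if two such paths end in the same leaf, walking up
from that leaf meets both starting nodes, so the shorter path is a tail of the longer one,
and the longer one would then traverse the 0-annotated edge into the lower starting node.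
-/

namespace Relation

variable {V : Type*} {f : V → V} {p : V → Prop}

theorem ReflTransGen.exists_iterate_eq {a b : V}
    (h : ReflTransGen (fun a b => f b = a ∧ p b) a b) :
    ∃ k, f^[k] b = a ∧ ∀ i < k, p (f^[i] b) := by
  induction h with
  | refl => exact ⟨0, rfl, by simp⟩
  | tail _ hbc ih =>
    obtain ⟨k, hk, hp⟩ := ih
    obtain ⟨hfc, hpc⟩ := hbc
    refine ⟨k + 1, by rw [Function.iterate_succ_apply, hfc, hk], ?_⟩
    rintro (_ | i) hi
    · exact hpc
    · rw [Function.iterate_succ_apply, hfc]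
      exact hp i (by omega)

theorem ReflTransGen.eq_of_not_of_not {u v l : V} (hu : ¬ p u) (hv : ¬ p v)
    (hul : ReflTransGen (fun a b => f b = a ∧ p b) u l)
    (hvl : ReflTransGen (fun a b => f b = a ∧ p b) v l) : u = v := by
  obtain ⟨j, rfl, hpj⟩ := hul.exists_iterate_eq
  obtain ⟨k, rfl, hpk⟩ := hvl.exists_iterate_eq
  rcases lt_trichotomy j k with hjk | rfl | hkj
  · exact absurd (hpk j hjk) hu
  · rfl
  · exact absurd (hpj k hkj) hv

end Relation

theorem zero_edges_le_leaves_general {V : Type*} [Fintype V]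
    (root : V) (parent : V → V)
    (ann : V → ℕ)
    (hpath : ∀ v : V, ∃ l : V,
        Relation.ReflTransGen (fun a b => b ≠ root ∧ parent b = a ∧ ann b ≠ 0) v l ∧
        ∀ u, ¬ (u ≠ root ∧ parent u = l)) :
    {v : V | v ≠ root ∧ ann v = 0}.ncard ≤
      {l : V | ∀ u, ¬ (u ≠ root ∧ parent u = l)}.ncard := by
  choose leaf hreach hleaf using hpath
  have hreach' (v : V) :
      Relation.ReflTransGen (fun a b => parent b = a ∧ ann b ≠ 0) v (leaf v) :=
    Relation.ReflTransGen.mono (fun _ _ h => h.2) _ _ (hreach v)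
  refine Set.ncard_le_ncard_of_injOn leaf (fun v _ => hleaf v) ?_
  intro u hu v hv huv
  exact Relation.ReflTransGen.eq_of_not_of_not (not_not.mpr hu.2) (not_not.mpr hv.2)
    (hreach' u) (huv ▸ hreach' v)

/-- In a finite rooted tree where every node reaches a leaf by a path of non-0
annotated edges, and no non-0 annotation repeats along a root-to-leaf path, the
number of 0-annotated edges is at most the number of leaves. -/
theorem zero_edges_le_leaves {V : Type*} [Fintype V]
    (root : V) (parent : V → V)
    (hroot : parent root = root)
    (hacc : ∀ v : V, ∃ k : ℕ, parent^[k] v = root)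
    (ann : V → ℕ)
    (hpath : ∀ v : V, ∃ l : V,
        Relation.ReflTransGen (fun a b => b ≠ root ∧ parent b = a ∧ ann b ≠ 0) v l ∧
        ∀ u, ¬ (u ≠ root ∧ parent u = l))
    (hnorepeat : ∀ u v : V, u ≠ v →
        Relation.ReflTransGen (fun a b => b ≠ root ∧ parent b = a) u v →
        u ≠ root → ann u ≠ 0 → ann u ≠ ann v) :
    {v : V | v ≠ root ∧ ann v = 0}.ncard ≤
      {l : V | ∀ u, ¬ (u ≠ root ∧ parent u = l)}.ncard :=
  zero_edges_le_leaves_general root parent ann hpath
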